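/- If the relation ≺° generated by the rules (O),(A),(TB),(FB),(T) is irreflexive, then every canonical order ≺ for G is an A-Stick order of G. -/

import Mathlib

open Sum

/-- The relation `≺°` generated by the rules (O), (A), (TB), (FB), (T). -/
inductive Prec (n : ℕ) (β : Type) (E : Fin n → β → Prop) (k : β → Fin n) :
    (Fin n ⊕ β) → (Fin n ⊕ β) → Prop
  | O : ∀ {i j : Fin n}, i < j → Prec n β E k (inl i) (inl j)
  | A : ∀ {t : Fin n} {j : β}, E t j → Prec n β E k (inl t) (inr j)
  | TB : ∀ {s t : Fin n} {h j : β}, s < t → t < k j → E s j → ¬ E t j → E t h →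
      Prec n β E k (inr h) (inr j)
  | FB : ∀ {t : Fin n} {w h j : β}, Prec n β E k (inr w) (inr j) → k j < t → E t w →
      E t h → Prec n β E k (inr h) (inr j)
  | T : ∀ {p q r : Fin n ⊕ β}, Prec n β E k p q → Prec n β E k q r → Prec n β E k p r
/-- A Stick order for `G = (A ∪ B, E)`: a linear (strict total) order on `A ∪ B` such that
every `A`-endpoint of an edge precedes its `B`-endpoint, and there is no forbidden
configuration `a' ≺ a ≺ b ≺ b'` with `a'b ∈ E`, `ab' ∈ E`, `ab ∉ E`. -/
def IsStickOrder (n : ℕ) (β : Type) (E : Fin n → β → Prop)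
    (r : (Fin n ⊕ β) → (Fin n ⊕ β) → Prop) : Prop :=
  IsStrictTotalOrder (Fin n ⊕ β) r ∧
  (∀ (a : Fin n) (b : β), E a b → r (inl a) (inr b)) ∧
  ¬ ∃ (a a' : Fin n) (b b' : β),
      r (inl a') (inl a) ∧ r (inl a) (inr b) ∧ r (inr b) (inr b') ∧
      E a' b ∧ E a b' ∧ ¬ E a b

/-- An A-Stick order: a Stick order whose restriction to `A` is the given order. -/
def IsAStickOrder (n : ℕ) (β : Type) (E : Fin n → β → Prop)
    (r : (Fin n ⊕ β) → (Fin n ⊕ β) → Prop) : Prop :=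
  IsStickOrder n β E r ∧ ∀ i j : Fin n, r (inl i) (inl j) ↔ i < j
/-- A canonical order for `G` (with `m j = max {i | a_i ≺° b_j}` given as a parameter):
a linear (strict total) order on `A ∪ B` extending `≺°` in which every `b_j` is
left-optimal, i.e. `a_{m_j} ≺ b_j` and `b_j ≺ a_{m_j + 1}` whenever `m_j < n`. -/
def IsCanonicalOrder (n : ℕ) (β : Type) (E : Fin n → β → Prop) (k : β → Fin n)
    (m : β → Fin n) (r : (Fin n ⊕ β) → (Fin n ⊕ β) → Prop) : Prop :=
  IsStrictTotalOrder (Fin n ⊕ β) r ∧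
  (∀ c d : Fin n ⊕ β, Prec n β E k c d → r c d) ∧
  ∀ j : β, r (inl (m j)) (inr j) ∧
    ∀ hlt : (m j : ℕ) + 1 < n, r (inr j) (inl ⟨(m j : ℕ) + 1, hlt⟩)

/-!
Rules (O) and (A) are part of `≺°`, so a canonical order restricts to the given order on `A`
and puts every edge in the right direction. A forbidden pattern `a' ≺ a ≺ b ≺ b'` with
`a'b, ab' ∈ E`, `ab ∉ E` is excluded by deriving `b' ≺° b`, against `b ≺ b'`. If `a < k_b`
this is rule (TB). If `k_b < a`, left-optimality of `b` forces `a ≤ m_b`, hence `a ≺° b`; such a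
derivation starts from an edge `a_t b_w` with `a ≤ t` and `b_w ⪯° b`, and an induction over
`≺°` shows that (FB) applies at every column `i` with `k_b < i ≤ k_w`, in particular at `a`.
-/

namespace Prec

variable {n : ℕ} {β : Type} {E : Fin n → β → Prop} {k : β → Fin n}

theorem exists_eq_inl_lt {c : Fin n ⊕ β} {q : Fin n} (h : Prec n β E k c (inl q)) :
    ∃ p, c = inl p ∧ p < q := by
  generalize hd : (inl q : Fin n ⊕ β) = d at h
  induction h generalizing q with
  | O hij => cases hd; exact ⟨_, rfl, hij⟩
  | A _ | TB _ _ _ _ _ | FB _ _ _ _ => cases hd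
  | T _ _ ih₁ ih₂ =>
    obtain ⟨p', rfl, hp'q⟩ := ih₂ hd
    obtain ⟨p, rfl, hpp'⟩ := ih₁ rfl
    exact ⟨p, rfl, hpp'.trans hp'q⟩

theorem lt_of_inl_inl {p q : Fin n} (h : Prec n β E k (inl p) (inl q)) : p < q := by
  obtain ⟨p', hp, hlt⟩ := h.exists_eq_inl_lt
  cases hp
  exact hlt

theorem not_inr_inl {w : β} {q : Fin n} : ¬ Prec n β E k (inr w) (inl q) := fun h => by
  obtain ⟨p, hp, -⟩ := h.exists_eq_inl_lt
  cases hp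

theorem exists_edge_of_inl_inr {p : Fin n} {j : β} (h : Prec n β E k (inl p) (inr j)) :
    ∃ t w, p ≤ t ∧ E t w ∧ Relation.ReflGen (fun u v => Prec n β E k (inr u) (inr v)) w j := by
  generalize hc : (inl p : Fin n ⊕ β) = c at h
  generalize hd : (inr j : Fin n ⊕ β) = d at h
  induction h generalizing p j with
  | O _ => cases hd
  | TB _ _ _ _ _ | FB _ _ _ _ => cases hc
  | A hE => cases hc; cases hd; exact ⟨_, _, le_rfl, hE, .refl⟩
  | @T c x d h₁ h₂ ih₁ ih₂ =>
    subst hc hd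
    cases x with
    | inl q =>
      obtain ⟨t, w, hqt, htw, hwj⟩ := ih₂ rfl rfl
      exact ⟨t, w, h₁.lt_of_inl_inl.le.trans hqt, htw, hwj⟩
    | inr u =>
      obtain ⟨t, w, hpt, htw, hwu⟩ := ih₁ rfl rfl
      refine ⟨t, w, hpt, htw, .single ?_⟩
      cases hwu with
      | refl => exact h₂
      | single hwu => exact hwu.T h₂

variable (hk : ∀ j : β, E (k j) j ∧ ∀ i : Fin n, E i j → i ≤ k j)
include hk

theorem inr_of_edge_lt {s i : Fin n} {w h j : β} (hwj : Prec n β E k (inr w) (inr j))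
    (hsi : s < i) (hki : k j < i) (hik : i ≤ k w) (hsw : E s w) (hih : E i h) :
    Prec n β E k (inr h) (inr j) := by
  by_cases hiw : E i w
  · exact hwj.FB hki hiw hih
  · have hik : i < k w := hik.lt_of_ne fun hi => hiw (hi ▸ (hk w).1)
    exact (TB hsi hik hsw hiw hih).T hwj

/-- Rule (FB) holds not only at the columns `t` of edges of `b_w` but at every column `i`
with `k_j < i ≤ k_w`. -/
theorem inr_of_k_lt_le {w j h : β} {i : Fin n} (hwj : Prec n β E k (inr w) (inr j))
    (hki : k j < i) (hik : i ≤ k w) (hih : E i h) : Prec n β E k (inr h) (inr j) := by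
  generalize hc : (inr w : Fin n ⊕ β) = c at hwj
  generalize hd : (inr j : Fin n ⊕ β) = d at hwj
  induction hwj generalizing w j with
  | O _ | A _ => cases hc
  | TB hst htk hs hnt ht =>
    cases hc; cases hd
    exact inr_of_edge_lt hk (TB hst htk hs hnt ht) (htk.trans hki) hki hik ht hih
  | @FB t w' _ _ hw'j hkt htw' htw ih =>
    cases hc; cases hd
    rcases le_or_gt i t with hit | hti
    · exact ih hki (hit.trans ((hk w').2 t htw')) rfl rfl
    · exact inr_of_edge_lt hk (hw'j.FB hkt htw' htw) hti hki hik htw hih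
  | @T _ x _ h₁ h₂ ih₁ ih₂ =>
    subst hc hd
    cases x with
    | inl q => exact absurd h₁ not_inr_inl
    | inr u =>
      rcases le_or_gt i (k u) with hiu | hui
      · exact ih₂ hki hiu rfl rfl
      · exact (ih₁ hui hik rfl rfl).T h₂

theorem inr_of_inl_inr {a : Fin n} {b h : β} (hab : Prec n β E k (inl a) (inr b))
    (hka : k b < a) (hah : E a h) : Prec n β E k (inr h) (inr b) := by
  obtain ⟨t, w, hat, htw, hwb⟩ := hab.exists_edge_of_inl_inr
  have hak : a ≤ k w := hat.trans ((hk w).2 t htw)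
  cases hwb with
  | refl => exact absurd hak (not_le.2 hka)
  | single hwb => exact inr_of_k_lt_le hk hwb hka hak hah

end Prec

namespace IsCanonicalOrder

variable {n : ℕ} {β : Type} {E : Fin n → β → Prop} {k m : β → Fin n}
  {r : Fin n ⊕ β → Fin n ⊕ β → Prop}

theorem inl_lt_inl_iff (hr : IsCanonicalOrder n β E k m r) (i j : Fin n) :
    r (inl i) (inl j) ↔ i < j := by
  have := hr.1
  refine ⟨fun hij => ?_, fun hij => hr.2.1 _ _ (.O hij)⟩
  rcases lt_trichotomy i j with hlt | rfl | hgt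
  · exact hlt
  · exact absurd hij (irrefl _)
  · exact absurd (hr.2.1 _ _ (.O hgt)) (asymm hij)

theorem le_of_inl_inr (hr : IsCanonicalOrder n β E k m r) {a : Fin n} {b : β}
    (hab : r (inl a) (inr b)) : a ≤ m b := by
  have := hr.1
  by_contra! hma
  have hlt : (m b : ℕ) + 1 < n := lt_of_le_of_lt hma a.isLt
  have hba : r (inr b) (inl a) := by
    rcases (Fin.mk_le_of_le_val (b := a) (Nat.succ_le_of_lt hma)).lt_or_eq with h | h
    · exact _root_.trans ((hr.2.2 b).2 hlt) ((hr.inl_lt_inl_iff _ _).2 h)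
    · exact h ▸ (hr.2.2 b).2 hlt
  exact asymm hab hba

end IsCanonicalOrder

theorem stmt8_general (n : ℕ) (β : Type) (E : Fin n → β → Prop) (k : β → Fin n)
    (hk : ∀ j : β, E (k j) j ∧ ∀ i : Fin n, E i j → i ≤ k j)
    (m : β → Fin n)
    (hm : ∀ j : β, Prec n β E k (inl (m j)) (inr j) ∧
      ∀ i : Fin n, Prec n β E k (inl i) (inr j) → i ≤ m j) :
    ∀ r, IsCanonicalOrder n β E k m r → IsAStickOrder n β E r := by
  intro r hr
  have := hr.1
  refine ⟨⟨hr.1, fun a b hab => hr.2.1 _ _ (.A hab), ?_⟩, hr.inl_lt_inl_iff⟩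
  rintro ⟨a, a', b, b', ha'a, hab, hbb', ha'b, hab', hnab⟩
  suffices Prec n β E k (inr b') (inr b) from asymm hbb' (hr.2.1 _ _ this)
  rcases lt_trichotomy a (k b) with hak | rfl | hka
  · exact .TB ((hr.inl_lt_inl_iff _ _).1 ha'a) hak ha'b hnab hab'
  · exact absurd (hk b).1 hnab
  · have hamb : Prec n β E k (inl a) (inr b) :=
      (hr.le_of_inl_inr hab).lt_or_eq.elim (fun h => (Prec.O h).T (hm b).1) (· ▸ (hm b).1)
    exact hamb.inr_of_inl_inr hk hka hab'

/-- If the relation `≺°` generated by (O),(A),(TB),(FB),(T) is irreflexive,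
then every canonical order for `G` is an A-Stick order of `G`. -/
theorem stmt8 (n : ℕ) (β : Type) [Fintype β] (E : Fin n → β → Prop) (k : β → Fin n)
    (hk : ∀ j : β, E (k j) j ∧ ∀ i : Fin n, E i j → i ≤ k j)
    (m : β → Fin n)
    (hm : ∀ j : β, Prec n β E k (inl (m j)) (inr j) ∧
      ∀ i : Fin n, Prec n β E k (inl i) (inr j) → i ≤ m j)
    (hirr : ∀ c : Fin n ⊕ β, ¬ Prec n β E k c c) :
    ∀ r, IsCanonicalOrder n β E k m r → IsAStickOrder n β E r :=
  stmt8_general n β E k hk m hm
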